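/- Consider a multi-layer ScBM with population matrices P_l = ρ Y B_l Zᵀ for l = 1,…,L, and suppose Σ_{l=1}^L B_l B_lᵀ has rank K < K_y (the rank-deficient case). Let U ∈ ℝ^{n×K} be any matrix with orthonormal columns and Λ a K×K invertible diagonal matrix such that Σ_{l=1}^L P_l P_lᵀ = U Λ Uᵀ. Then: (i) for all i, j with Y_{i∗} = Y_{j∗}, one has U_{i∗} = U_{j∗}; (ii) if the rows of Δ_y^{-1} Q^R are mutually distinct and there is ζ_n > 0 with min_{1≤k≠k'≤K_y} ‖Q^R_{k∗}/√(n_k^y) − Q^R_{k'∗}/√(n_{k'}^y)‖₂ ≥ ζ_n, then for all i, j with Y_{i∗} ≠ Y_{j∗}, one has ‖U_{i∗} − U_{j∗}‖₂ ≥ ζ_n. -/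

import Mathlib

/-!
Write `W = Y Δ_y⁻¹`, which has orthonormal columns. Then
`∑ P_l P_lᵀ = ρ² Y (∑ B_l Δ_z² B_lᵀ) Yᵀ = V (ρ² D^R) Vᵀ` with `V = W Q^R` column-orthonormal.
Two such decompositions of the same matrix, one with invertible eigenvalues, differ by an
orthogonal `S`: `U = V S`. Row `i` of `U` is therefore `(Q^R_{g_i} / √n_{g_i}) S`, which depends
only on the cluster of `i`, and `S` preserves distances between rows.
-/

open Matrix Finset
open scoped BigOperators Classical

noncomputable section

/-- Row membership matrix associated with a cluster assignment `g`. -/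
def memb {n K : ℕ} (g : Fin n → Fin K) : Matrix (Fin n) (Fin K) ℝ :=
  Matrix.of fun i k => if g i = k then 1 else 0

/-- Size of cluster `k` under assignment `g`. -/
def csize {n K : ℕ} (g : Fin n → Fin K) (k : Fin K) : ℕ :=
  (Finset.univ.filter fun i => g i = k).card

/-- Diagonal matrix Δ = diag(√n_1, …, √n_K). -/
def Dmat {n K : ℕ} (g : Fin n → Fin K) : Matrix (Fin K) (Fin K) ℝ :=
  Matrix.diagonal fun k => Real.sqrt (csize g k)

/-- Diagonal matrix Δ⁻¹ = diag(1/√n_1, …, 1/√n_K). -/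
def DmatInv {n K : ℕ} (g : Fin n → Fin K) : Matrix (Fin K) (Fin K) ℝ :=
  Matrix.diagonal fun k => (Real.sqrt (csize g k))⁻¹

/-- Euclidean distance between the `i`-th and `j`-th rows of `M`. -/
def rowDist {n K : ℕ} (M : Matrix (Fin n) (Fin K) ℝ) (i j : Fin n) : ℝ :=
  Real.sqrt (∑ m, (M i m - M j m) ^ 2)

lemma memb_mul_apply {n K m : ℕ} (g : Fin n → Fin K) (X : Matrix (Fin K) (Fin m) ℝ)
    (i : Fin n) : (memb g * X) i = X (g i) := by
  ext a
  simp [memb, Matrix.mul_apply]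

lemma memb_eq_memb_iff {n K : ℕ} (g : Fin n → Fin K) (i j : Fin n) :
    memb g i = memb g j ↔ g i = g j := by
  refine ⟨fun h => ?_, fun h => by ext k; simp [memb, h]⟩
  simpa [memb] using (congrFun h (g j)).symm

lemma transpose_memb_mul_memb {n K : ℕ} (g : Fin n → Fin K) :
    (memb g)ᵀ * memb g = diagonal fun k => (csize g k : ℝ) := by
  ext k k'
  by_cases h : k = k'
  · subst h
    simp [Matrix.mul_apply, memb, csize, ← ite_and]
  · simp only [Matrix.mul_apply, transpose_apply, memb, of_apply, diagonal_apply_ne _ h]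
    refine Finset.sum_eq_zero fun i _ => ?_
    by_cases hk : g i = k <;> simp [hk, h]

lemma Dmat_sq {n K : ℕ} (g : Fin n → Fin K) :
    Dmat g ^ 2 = diagonal fun k => (csize g k : ℝ) := by
  simp [sq, Dmat, diagonal_mul_diagonal]

lemma DmatInv_mul_Dmat {n K : ℕ} {g : Fin n → Fin K} (hg : ∀ k, 0 < csize g k) :
    DmatInv g * Dmat g = 1 := by
  rw [DmatInv, Dmat, diagonal_mul_diagonal, ← diagonal_one]
  congr 1
  ext k
  exact inv_mul_cancel₀ (Real.sqrt_ne_zero'.mpr (by exact_mod_cast hg k))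

lemma DmatInv_mul_apply {n K m : ℕ} (g : Fin n → Fin K) (Q : Matrix (Fin K) (Fin m) ℝ)
    (k : Fin K) (a : Fin m) : (DmatInv g * Q) k a = Q k a / Real.sqrt (csize g k) := by
  rw [DmatInv, diagonal_mul, div_eq_inv_mul]

lemma transpose_mul_self_memb_mul_DmatInv {n K : ℕ} {g : Fin n → Fin K}
    (hg : ∀ k, 0 < csize g k) :
    (memb g * DmatInv g)ᵀ * (memb g * DmatInv g) = 1 := by
  have hDT : (DmatInv g)ᵀ = DmatInv g := diagonal_transpose _
  calc (memb g * DmatInv g)ᵀ * (memb g * DmatInv g)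
      = DmatInv g * ((memb g)ᵀ * memb g) * DmatInv g := by
        rw [transpose_mul, hDT]; simp only [Matrix.mul_assoc]
    _ = (DmatInv g * Dmat g) * (Dmat g * DmatInv g) := by
        rw [transpose_memb_mul_memb, ← Dmat_sq, sq]; simp only [Matrix.mul_assoc]
    _ = 1 := by
        rw [DmatInv_mul_Dmat hg, mul_eq_one_comm.mp (DmatInv_mul_Dmat hg), Matrix.one_mul]

lemma memb_mul_mul_transpose_memb {n K : ℕ} {g : Fin n → Fin K} (hg : ∀ k, 0 < csize g k)
    (M : Matrix (Fin K) (Fin K) ℝ) :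
    memb g * M * (memb g)ᵀ =
      (memb g * DmatInv g) * (Dmat g * M * Dmat g) * (memb g * DmatInv g)ᵀ := by
  have hDT : (Dmat g)ᵀ = Dmat g := diagonal_transpose _
  have hY : memb g = memb g * DmatInv g * Dmat g := by
    rw [Matrix.mul_assoc, DmatInv_mul_Dmat hg, Matrix.mul_one]
  conv_lhs => rw [hY, transpose_mul, hDT]
  simp only [Matrix.mul_assoc]

lemma sum_mul_transpose_eq_smul {n L Ky Kz : ℕ} {ρ : ℝ} {gy : Fin n → Fin Ky}
    {gz : Fin n → Fin Kz} {B : Fin L → Matrix (Fin Ky) (Fin Kz) ℝ}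
    {P : Fin L → Matrix (Fin n) (Fin n) ℝ}
    (hP : ∀ l, P l = ρ • (memb gy * B l * (memb gz)ᵀ)) :
    ∑ l, P l * (P l)ᵀ =
      ρ ^ 2 • (memb gy * (∑ l, B l * Dmat gz ^ 2 * (B l)ᵀ) * (memb gy)ᵀ) := by
  simp only [hP, Matrix.mul_sum, Matrix.sum_mul, Finset.smul_sum]
  refine Finset.sum_congr rfl fun l _ => ?_
  rw [Dmat_sq, ← transpose_memb_mul_memb, transpose_smul, transpose_mul, transpose_mul,
    transpose_transpose, Matrix.smul_mul, Matrix.mul_smul, smul_smul, sq]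
  simp only [Matrix.mul_assoc]

theorem exists_mem_orthogonalGroup_eq_mul_of_mul_diagonal_mul_transpose_eq
    {R m k : Type*} [Field R] [Fintype m] [Fintype k] [DecidableEq k]
    {U V : Matrix m k R} {d d' : k → R} (hU : Uᵀ * U = 1) (hV : Vᵀ * V = 1)
    (hd : ∀ a, d a ≠ 0) (h : U * diagonal d * Uᵀ = V * diagonal d' * Vᵀ) :
    ∃ S ∈ orthogonalGroup k R, U = V * S := by
  have hdd : diagonal d * diagonal (fun a => (d a)⁻¹) = 1 := by
    rw [diagonal_mul_diagonal, ← diagonal_one]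
    exact congrArg diagonal (funext fun a => mul_inv_cancel₀ (hd a))
  -- the column space of `U` lies in that of `V`, so `V Vᵀ` fixes `U`
  have hUV : U = V * (diagonal d' * Vᵀ * U * diagonal fun a => (d a)⁻¹) := by
    calc U = U * diagonal d * Uᵀ * (U * diagonal fun a => (d a)⁻¹) := by
          simp only [Matrix.mul_assoc]
          rw [← Matrix.mul_assoc Uᵀ, hU, Matrix.one_mul, hdd, Matrix.mul_one]
      _ = _ := by rw [h]; simp only [Matrix.mul_assoc]
  have hproj : V * (Vᵀ * U) = U := by
    conv_lhs => rw [hUV, ← Matrix.mul_assoc Vᵀ, hV, Matrix.one_mul, ← hUV]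
  refine ⟨Vᵀ * U, (mem_orthogonalGroup_iff k R).2 (mul_eq_one_comm.mp ?_), hproj.symm⟩
  rw [transpose_mul, transpose_transpose, Matrix.mul_assoc, hproj, hU]

lemma rowDist_mul_of_mem_orthogonalGroup {n K : ℕ} (M : Matrix (Fin n) (Fin K) ℝ)
    {S : Matrix (Fin K) (Fin K) ℝ} (hS : S ∈ orthogonalGroup (Fin K) ℝ) (i j : Fin n) :
    rowDist (M * S) i j = rowDist M i j := by
  have hdot : ∀ x : Fin K → ℝ, (x ᵥ* S) ⬝ᵥ (x ᵥ* S) = x ⬝ᵥ x := fun x => by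
    rw [← dotProduct_mulVec, ← vecMul_transpose, vecMul_vecMul,
      (mem_orthogonalGroup_iff _ _).1 hS, vecMul_one]
  have h := hdot (M i - M j)
  rw [sub_vecMul] at h
  simpa only [rowDist, mul_apply_eq_vecMul, dotProduct, Pi.sub_apply, sq]
    using congrArg Real.sqrt h

lemma rowDist_memb_mul {n K m : ℕ} (g : Fin n → Fin K) (X : Matrix (Fin K) (Fin m) ℝ)
    (i j : Fin n) : rowDist (memb g * X) i j = rowDist X (g i) (g j) := by
  simp only [rowDist, memb_mul_apply]

theorem stmt1_general
    (n L Ky Kz K : ℕ)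
    (ρ : ℝ)
    (gy : Fin n → Fin Ky) (gz : Fin n → Fin Kz)
    (hny : ∀ k, 0 < csize gy k)
    (B : Fin L → Matrix (Fin Ky) (Fin Kz) ℝ)
    (P : Fin L → Matrix (Fin n) (Fin n) ℝ)
    (hP : ∀ l, P l = ρ • (memb gy * B l * (memb gz)ᵀ))
    -- eigendecomposition ∑ P_l P_lᵀ = U Λ Uᵀ with U column-orthonormal, Λ invertible diagonal
    (U : Matrix (Fin n) (Fin K) ℝ) (hUorth : Uᵀ * U = 1)
    (d : Fin K → ℝ) (hd : ∀ m, d m ≠ 0)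
    (hdecomp : ∑ l, P l * (P l)ᵀ = U * Matrix.diagonal d * Uᵀ)
    -- eigendecomposition Δ_y (∑ B_l Δ_z² B_lᵀ) Δ_y = Q^R D^R (Q^R)ᵀ,
    -- Q^R column-orthonormal, D^R invertible diagonal
    (QR : Matrix (Fin Ky) (Fin K) ℝ) (hQorth : QRᵀ * QR = 1)
    (dR : Fin K → ℝ)
    (hQdec : Dmat gy * (∑ l, B l * (Dmat gz) ^ 2 * (B l)ᵀ) * Dmat gy =
      QR * Matrix.diagonal dR * QRᵀ) :
    -- (i)
    (∀ i j : Fin n, memb gy i = memb gy j → U i = U j) ∧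
    -- (ii)
    (∀ ζ : ℝ, 0 < ζ →
      (∀ k k' : Fin Ky, k ≠ k' → (DmatInv gy * QR) k ≠ (DmatInv gy * QR) k') →
      (∀ k k' : Fin Ky, k ≠ k' →
        ζ ≤ Real.sqrt (∑ m, (QR k m / Real.sqrt (csize gy k) -
              QR k' m / Real.sqrt (csize gy k')) ^ 2)) →
      ∀ i j : Fin n, memb gy i ≠ memb gy j → ζ ≤ rowDist U i j) := by
  set V := memb gy * DmatInv gy * QR
  have hVorth : Vᵀ * V = 1 := by
    rw [transpose_mul, Matrix.mul_assoc, ← Matrix.mul_assoc _ (memb gy * DmatInv gy),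
      transpose_mul_self_memb_mul_DmatInv hny, Matrix.one_mul, hQorth]
  have hsum : ∑ l, P l * (P l)ᵀ = V * diagonal (ρ ^ 2 • dR) * Vᵀ := by
    rw [sum_mul_transpose_eq_smul hP, memb_mul_mul_transpose_memb hny, hQdec,
      diagonal_smul]
    simp only [V, transpose_mul, Matrix.smul_mul, Matrix.mul_smul, Matrix.mul_assoc]
  obtain ⟨S, hS, hUS⟩ :=
    exists_mem_orthogonalGroup_eq_mul_of_mul_diagonal_mul_transpose_eq hUorth hVorth hd
      (hdecomp.symm.trans hsum)
  have hU : U = memb gy * (DmatInv gy * QR * S) := by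
    rw [hUS]; simp only [V, Matrix.mul_assoc]
  refine ⟨fun i j hij => ?_, fun ζ _ _ hsep i j hij => ?_⟩
  · rw [hU, memb_mul_apply, memb_mul_apply, (memb_eq_memb_iff gy i j).1 hij]
  · rw [hU, rowDist_memb_mul, rowDist_mul_of_mem_orthogonalGroup _ hS]
    simpa only [rowDist, DmatInv_mul_apply] using
      hsep _ _ (mt (memb_eq_memb_iff gy i j).2 hij)

/-- rank-deficient case of Lemma 2.1 (row clusters). -/
theorem stmt1
    (n L Ky Kz K : ℕ) (hn : 0 < n) (hL : 0 < L)
    (ρ : ℝ) (hρ0 : 0 < ρ) (hρ1 : ρ ≤ 1)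
    (gy : Fin n → Fin Ky) (gz : Fin n → Fin Kz)
    (hny : ∀ k, 0 < csize gy k) (hnz : ∀ k, 0 < csize gz k)
    (B : Fin L → Matrix (Fin Ky) (Fin Kz) ℝ)
    (hB : ∀ l a b, 0 ≤ B l a b ∧ B l a b ≤ 1)
    (P : Fin L → Matrix (Fin n) (Fin n) ℝ)
    (hP : ∀ l, P l = ρ • (memb gy * B l * (memb gz)ᵀ))
    -- rank-deficient case: rank(∑ B_l B_lᵀ) = K < K_y
    (hrank : (∑ l, B l * (B l)ᵀ).rank = K) (hKlt : K < Ky)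
    -- eigendecomposition ∑ P_l P_lᵀ = U Λ Uᵀ with U column-orthonormal, Λ invertible diagonal
    (U : Matrix (Fin n) (Fin K) ℝ) (hUorth : Uᵀ * U = 1)
    (d : Fin K → ℝ) (hd : ∀ m, d m ≠ 0)
    (hdecomp : ∑ l, P l * (P l)ᵀ = U * Matrix.diagonal d * Uᵀ)
    -- eigendecomposition Δ_y (∑ B_l Δ_z² B_lᵀ) Δ_y = Q^R D^R (Q^R)ᵀ,
    -- Q^R column-orthonormal, D^R invertible diagonal
    (QR : Matrix (Fin Ky) (Fin K) ℝ) (hQorth : QRᵀ * QR = 1)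
    (dR : Fin K → ℝ) (hdR : ∀ m, dR m ≠ 0)
    (hQdec : Dmat gy * (∑ l, B l * (Dmat gz) ^ 2 * (B l)ᵀ) * Dmat gy =
      QR * Matrix.diagonal dR * QRᵀ) :
    -- (i)
    (∀ i j : Fin n, memb gy i = memb gy j → U i = U j) ∧
    -- (ii)
    (∀ ζ : ℝ, 0 < ζ →
      (∀ k k' : Fin Ky, k ≠ k' → (DmatInv gy * QR) k ≠ (DmatInv gy * QR) k') →
      (∀ k k' : Fin Ky, k ≠ k' →
        ζ ≤ Real.sqrt (∑ m, (QR k m / Real.sqrt (csize gy k) -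
              QR k' m / Real.sqrt (csize gy k')) ^ 2)) →
      ∀ i j : Fin n, memb gy i ≠ memb gy j → ζ ≤ rowDist U i j) :=
  stmt1_general n L Ky Kz K ρ gy gz hny B P hP U hUorth d hd hdecomp QR hQorth dR hQdec
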